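/- There exists N₀ such that for all N ≥ N₀ and all integers i with √N + 1 ≤ i ≤ N − 22, the threshold sequence satisfies t_i^{(N)} ≥ (i + 1)/(√(N − i + 3) + 0.148). -/
import Mathlib

open Filter Real

/-- Auxiliary backwards recurrence: `tAux N n` equals `t_{N-1-n}^{(N)}`, where
`t_{N-1} = N/2` and `t_{i-1} = (s_i²(s_i+1) + 2(i² − s_i²) t_i) / (2 i (i+1))`
with `s_i = ⌊t_i⌋`. -/
noncomputable def tAux (N : ℕ) : ℕ → ℝ
  | 0 => (N : ℝ) / 2
  | n + 1 =>
      let i : ℝ := (N : ℝ) - 1 - (n : ℝ)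
      let t : ℝ := tAux N n
      let s : ℝ := (⌊t⌋ : ℝ)
      (s ^ 2 * (s + 1) + 2 * (i ^ 2 - s ^ 2) * t) / (2 * i * (i + 1))

/-- The equilibrium threshold sequence `t_i^{(N)}` of the two-sided secretary game,
for `0 ≤ i ≤ N-1`. -/
noncomputable def tgame (N i : ℕ) : ℝ := tAux N (N - 1 - i)

set_option maxHeartbeats 1600000

lemma tAux_zero (N : ℕ) : tAux N 0 = (N:ℝ)/2 := rfl

lemma tAux_succ (N n : ℕ) : tAux N (n+1) =
    ((⌊tAux N n⌋:ℝ)^2*((⌊tAux N n⌋:ℝ)+1)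
      + 2*(((N:ℝ)-1-(n:ℝ))^2 - (⌊tAux N n⌋:ℝ)^2)*(tAux N n))
    / (2*((N:ℝ)-1-(n:ℝ))*(((N:ℝ)-1-(n:ℝ))+1)) := rfl

lemma floor_lower (t : ℝ) (ht : 1 ≤ t) :
    t^2 - t^3 - 1/8 ≤ (⌊t⌋:ℝ)^2*((⌊t⌋:ℝ)+1) - 2*(⌊t⌋:ℝ)^2*t := by
  have hs1 : (⌊t⌋:ℝ) ≤ t := Int.floor_le t
  have hs2 : t - 1 < (⌊t⌋:ℝ) := Int.sub_one_lt_floor t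
  rcases le_or_gt 2 t with h2 | h2
  · have hfac : 0 ≤ t^2 + (⌊t⌋:ℝ)*t - (⌊t⌋:ℝ)^2 - (⌊t⌋:ℝ) - t := by nlinarith
    nlinarith [mul_nonneg (sub_nonneg.2 hs1) hfac]
  · have hfl : ⌊t⌋ = 1 := by
      rw [Int.floor_eq_iff]
      constructor
      · exact_mod_cast ht
      · push_cast; linarith
    rw [hfl]
    push_cast
    nlinarith [sq_nonneg (t - 6/5), sq_nonneg (t-1), sq_nonneg (t-2)]

lemma floor_upper (t : ℝ) (ht : 1 ≤ t) :
    (⌊t⌋:ℝ)^2*((⌊t⌋:ℝ)+1) - 2*(⌊t⌋:ℝ)^2*t ≤ 0 := by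
  have hs1 : (⌊t⌋:ℝ) ≤ t := Int.floor_le t
  have hs0 : (1:ℝ) ≤ (⌊t⌋:ℝ) := by exact_mod_cast Int.le_floor.2 (by exact_mod_cast ht)
  nlinarith [sq_nonneg (⌊t⌋:ℝ)]

lemma phi_mono (j L t : ℝ) (h1 : 1 ≤ L) (h2 : L ≤ t) (h3 : t ≤ (j+1)/2) (hj : 2 ≤ j) :
    2*j^2*L + L^2 - L^3 ≤ 2*j^2*t + t^2 - t^3 := by
  have hin : 0 ≤ 2*j^2 + t + L - t^2 - t*L - L^2 := by nlinarith
  nlinarith [mul_nonneg (sub_nonneg.2 h2) hin]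

lemma crux_poly (j x : ℝ) (hx : 5 ≤ x) (hxj : x ≤ j - 2) (hj : 1000 ≤ j) :
    0 ≤ 2*j^2*(j+1)*(x+37/250)^2
      + (2*x^2+(37/125)*x+3787/2500)*((j+1)^2*(x+37/250) - (j+1)^3 - (x+37/250)^3/8) := by
  nlinarith [mul_nonneg (mul_nonneg (sub_nonneg.2 hx) (sq_nonneg x)) (sq_nonneg (j+1)),
    mul_nonneg (sub_nonneg.2 hxj) (mul_nonneg (sq_nonneg x) (by linarith : (0:ℝ) ≤ j)),
    mul_nonneg (mul_nonneg (sub_nonneg.2 hxj) (sub_nonneg.2 hx)) (sq_nonneg j),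
    sq_nonneg (x-5), sq_nonneg (j-x), mul_pos (by linarith : (0:ℝ) < j) (by linarith : (0:ℝ) < x),
    mul_nonneg (sub_nonneg.2 hx) (mul_nonneg (sub_nonneg.2 hxj) (mul_nonneg (sub_nonneg.2 hx) (by linarith : (0:ℝ) ≤ j)))]

lemma crux (j x y : ℝ) (hx : 5 ≤ x) (hy0 : 0 ≤ y) (hxy : y^2 = x^2 + 1)
    (hyx : x ≤ y) (hy1 : y ≤ x + 1/10) (hxj : x ≤ j - 2) (hj : 1000 ≤ j) :
    j/(y+37/250) ≤ (2*j^2*((j+1)/(x+37/250)) + ((j+1)/(x+37/250))^2 - ((j+1)/(x+37/250))^3 - 1/8)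
      / (2*j*(j+1)) := by
  have hu : (0:ℝ) < x + 37/250 := by linarith
  have hP : (x+y)*(y+37/250) ≤ 2*x^2+(37/125)*x+3787/2500 := by nlinarith [sq_nonneg (x-y)]
  have hneg : (j+1)^2*(x+37/250) - (j+1)^3 - (x+37/250)^3/8 ≤ 0 := by
    nlinarith [sq_nonneg (j+1), pow_pos hu 3]
  have hW : 0 ≤ 2*j^2*(j+1)*(x+37/250)^2
      + ((x+y)*(y+37/250))*((j+1)^2*(x+37/250) - (j+1)^3 - (x+37/250)^3/8) := by
    have := crux_poly j x hx hxj hj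
    nlinarith [mul_nonpos_of_nonneg_of_nonpos (sub_nonneg.2 hP) hneg]
  have h1 : ((2*j^2*(j+1)*(x+37/250)^2 + (j+1)^2*(x+37/250) - (j+1)^3 - (x+37/250)^3/8)*(y+37/250)
        - 2*j^2*(j+1)*(x+37/250)^3)*(x+y)
      = 2*j^2*(j+1)*(x+37/250)^2
      + ((x+y)*(y+37/250))*((j+1)^2*(x+37/250) - (j+1)^3 - (x+37/250)^3/8) := by
    linear_combination (2*j^2*(j+1)*(x+37/250)^2) * hxy
  have hkey : 2*j^2*(j+1)*(x+37/250)^3 ≤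
      (2*j^2*(j+1)*(x+37/250)^2 + (j+1)^2*(x+37/250) - (j+1)^3 - (x+37/250)^3/8)*(y+37/250) := by
    nlinarith [h1, hW, show (0:ℝ) < x + y by linarith]
  have e : (2*j^2*((j+1)/(x+37/250)) + ((j+1)/(x+37/250))^2 - ((j+1)/(x+37/250))^3 - 1/8)
      * (x+37/250)^3
      = 2*j^2*(j+1)*(x+37/250)^2 + (j+1)^2*(x+37/250) - (j+1)^3 - (x+37/250)^3/8 := by
    field_simp
  rw [div_le_div_iff₀ (by linarith) (by positivity)]
  have hfin : j*(2*j*(j+1))*(x+37/250)^3 ≤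
      ((2*j^2*((j+1)/(x+37/250)) + ((j+1)/(x+37/250))^2 - ((j+1)/(x+37/250))^3 - 1/8)*(y+37/250))
        *(x+37/250)^3 := by
    calc j*(2*j*(j+1))*(x+37/250)^3 = 2*j^2*(j+1)*(x+37/250)^3 := by ring
      _ ≤ (2*j^2*(j+1)*(x+37/250)^2 + (j+1)^2*(x+37/250) - (j+1)^3 - (x+37/250)^3/8)*(y+37/250) := hkey
      _ = _ := by rw [← e]; ring
  exact le_of_mul_le_mul_right hfin (by positivity)

lemma sqrt_1e12 : Real.sqrt (10^12) = 10^6 := by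
  rw [show (10^12:ℝ) = (10^6)^2 by norm_num, Real.sqrt_sq (by norm_num)]

lemma mid_step (Nr j t : ℝ) (hNr : 10^12 ≤ Nr) (hsq : Real.sqrt Nr + 1 ≤ j - 1)
    (hj22 : j ≤ Nr - 22)
    (hL : (j+1)/(Real.sqrt (Nr - j + 3) + 0.148) ≤ t) (hU : t ≤ (j+1)/2) :
    j/(Real.sqrt (Nr - (j-1) + 3) + 0.148)
      ≤ ((⌊t⌋:ℝ)^2*((⌊t⌋:ℝ)+1) + 2*(j^2 - (⌊t⌋:ℝ)^2)*t)/(2*j*(j+1))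
    ∧ ((⌊t⌋:ℝ)^2*((⌊t⌋:ℝ)+1) + 2*(j^2 - (⌊t⌋:ℝ)^2)*t)/(2*j*(j+1)) ≤ ((j-1)+1)/2 := by
  have hc : (0.148:ℝ) = 37/250 := by norm_num
  have hsN : (10^6:ℝ) ≤ Real.sqrt Nr := by
    rw [← sqrt_1e12]; exact Real.sqrt_le_sqrt hNr
  have hj : 1000 ≤ j := by linarith
  set x := Real.sqrt (Nr - j + 3) with hxdef
  set y := Real.sqrt (Nr - j + 4) with hydef
  have hA0 : (25:ℝ) ≤ Nr - j + 3 := by linarith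
  have hx2 : x^2 = Nr - j + 3 := Real.sq_sqrt (by linarith)
  have hy2 : y^2 = Nr - j + 4 := Real.sq_sqrt (by linarith)
  have hx : 5 ≤ x := by
    rw [show (5:ℝ) = Real.sqrt 25 by
      rw [show (25:ℝ) = 5^2 by norm_num, Real.sqrt_sq (by norm_num)]]
    exact Real.sqrt_le_sqrt hA0
  have hy0 : 0 ≤ y := Real.sqrt_nonneg _
  have hxy : y^2 = x^2 + 1 := by rw [hx2, hy2]; ring
  have hyx : x ≤ y := Real.sqrt_le_sqrt (by linarith)
  have hy1 : y ≤ x + 1/10 := by nlinarith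
  have hxj : x ≤ j - 2 := by
    have h1 : Nr ≤ (j-2)^2 := by
      have := Real.sq_sqrt (show (0:ℝ) ≤ Nr by linarith)
      nlinarith [Real.sqrt_nonneg Nr]
    have h2 : Nr - j + 3 ≤ (j-2)^2 := by linarith
    calc x ≤ Real.sqrt ((j-2)^2) := Real.sqrt_le_sqrt h2
      _ = j - 2 := Real.sqrt_sq (by linarith)
  have hrw : Nr - (j-1) + 3 = Nr - j + 4 := by ring
  rw [hrw, hc]
  rw [hc] at hL
  have hupos : (0:ℝ) < x + 37/250 := by linarith
  set F := (j+1)/(x+37/250) with hFdef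
  have hF1 : 1 ≤ F := by
    rw [hFdef, le_div_iff₀ hupos]; linarith
  have ht1 : 1 ≤ t := le_trans hF1 hL
  have hden : (0:ℝ) < 2*j*(j+1) := by positivity
  have hnum : (⌊t⌋:ℝ)^2*((⌊t⌋:ℝ)+1) + 2*(j^2 - (⌊t⌋:ℝ)^2)*t
      = 2*j^2*t + ((⌊t⌋:ℝ)^2*((⌊t⌋:ℝ)+1) - 2*(⌊t⌋:ℝ)^2*t) := by ring
  constructor
  · calc j/(y+37/250) ≤ (2*j^2*F + F^2 - F^3 - 1/8)/(2*j*(j+1)) := crux j x y hx hy0 hxy hyx hy1 hxj hj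
      _ ≤ (2*j^2*t + t^2 - t^3 - 1/8)/(2*j*(j+1)) := by
          apply (div_le_div_iff_of_pos_right hden).mpr
          have := phi_mono j F t hF1 hL hU (by linarith)
          linarith
      _ ≤ ((⌊t⌋:ℝ)^2*((⌊t⌋:ℝ)+1) + 2*(j^2 - (⌊t⌋:ℝ)^2)*t)/(2*j*(j+1)) := by
          gcongr
          have := floor_lower t ht1
          rw [hnum]; linarith
  · rw [hnum, div_le_div_iff₀ hden (by norm_num : (0:ℝ) < 2)]
    have := floor_upper t ht1
    nlinarith

lemma step_upper (j t : ℝ) (hj : 2 ≤ j) (ht : 1 ≤ t) (hU : t ≤ (j+1)/2) :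
    ((⌊t⌋:ℝ)^2*((⌊t⌋:ℝ)+1) + 2*(j^2 - (⌊t⌋:ℝ)^2)*t)/(2*j*(j+1)) ≤ j/2 := by
  rw [div_le_div_iff₀ (by positivity) (by norm_num : (0:ℝ) < 2)]
  have := floor_upper t ht
  nlinarith

lemma top_step (a b t Nr j : ℝ) (hN : 10^12 ≤ Nr) (hkj : Nr - 21 ≤ j) (hj1 : j ≤ Nr - 1)
    (hb1 : 1/6 ≤ b) (ha1 : 1/6 ≤ a) (ha2 : a ≤ 1/2) (hab : b ≤ a - a^3/2 - 1/10^7)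
    (hL : a*Nr ≤ t) (hU : t ≤ (j+1)/2) :
    b*Nr ≤ ((⌊t⌋:ℝ)^2*((⌊t⌋:ℝ)+1) + 2*(j^2 - (⌊t⌋:ℝ)^2)*t)/(2*j*(j+1)) := by
  have ht1 : (1:ℝ) ≤ t := by nlinarith
  have hj : (1000:ℝ) ≤ j := by linarith
  have hL1 : 1 ≤ a*Nr := by nlinarith
  have hmono := phi_mono j (a*Nr) t hL1 hL hU (by linarith)
  have hfl := floor_lower t ht1
  rw [le_div_iff₀ (by positivity)]
  have ha3u : a^3 ≤ 1/8 := by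
    have := pow_le_pow_left₀ (by linarith : (0:ℝ) ≤ a) ha2 3
    norm_num at this ⊢; linarith
  have ha30 : 0 ≤ a^3 := by positivity
  have h1 : 0 ≤ (a - a^3/2 - 1/10^7 - b) * (Nr*(j*(j+1))) := by
    apply mul_nonneg (by linarith) (by nlinarith)
  have h2 : j^2 + j - Nr^2 ≥ -41*Nr := by nlinarith
  have h3 : a^3*Nr*(j^2 + j - Nr^2) ≥ -6*Nr^2 := by nlinarith [mul_nonneg ha30 (by nlinarith : (0:ℝ) ≤ Nr)]
  have key : b*Nr*(2*j*(j+1)) ≤ 2*j^2*(a*Nr) + (a*Nr)^2 - (a*Nr)^3 - 1/8 := by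
    nlinarith [h1, h3, sq_nonneg (a*Nr), mul_nonneg (by linarith : (0:ℝ) ≤ a) (by nlinarith : (0:ℝ) ≤ Nr*j)]
  nlinarith [key, hmono, hfl]

noncomputable def aseq : ℕ → ℝ
  | 0 => 1/2
  | 1 => 4374999/10000000
  | 2 => 395629711/1000000000
  | 3 => 182333531/500000000
  | 4 => 10638121/31250000
  | 5 => 80173719/250000000
  | 6 => 304203811/1000000000
  | 7 => 145064103/500000000
  | 8 => 11116697/40000000
  | 9 => 133592209/500000000
  | 10 => 128823751/500000000
  | 11 => 249095793/1000000000
  | 12 => 30170957/125000000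
  | 13 => 46867343/200000000
  | 14 => 227902467/1000000000
  | 15 => 13873987/62500000
  | 16 => 108257183/500000000
  | 17 => 105719667/500000000
  | 18 => 206712867/1000000000
  | 19 => 50574081/250000000
  | 20 => 24769607/125000000
  | _ => 24283291/125000000

lemma aseq_cond : ∀ k : ℕ, k ≤ 20 → 1/6 ≤ aseq (k+1) ∧ 1/6 ≤ aseq k ∧ aseq k ≤ 1/2
    ∧ aseq (k+1) ≤ aseq k - (aseq k)^3/2 - 1/10^7 := by
  intro k hk
  interval_cases k <;>
    exact ⟨by norm_num [aseq], by norm_num [aseq], by norm_num [aseq], by norm_num [aseq]⟩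

lemma top_chain (N : ℕ) (hN : (10^12:ℝ) ≤ (N:ℝ)) :
    ∀ k : ℕ, k ≤ 21 → aseq k * N ≤ tAux N k ∧ tAux N k ≤ ((N:ℝ) - k)/2 := by
  intro k
  induction k with
  | zero =>
    intro _
    rw [tAux_zero]
    constructor
    · rw [show aseq 0 = 1/2 from rfl]; push_cast; linarith
    · push_cast; linarith
  | succ k ih =>
    intro hk1
    have hk : k ≤ 20 := by omega
    obtain ⟨c1, c2, c3, c4⟩ := aseq_cond k hk
    obtain ⟨ihL, ihU⟩ := ih (by omega)
    have hkr : (k:ℝ) ≤ 20 := by exact_mod_cast hk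
    have ht1 : (1:ℝ) ≤ tAux N k := by nlinarith
    have hU' : tAux N k ≤ (((N:ℝ)-1-(k:ℝ))+1)/2 := by
      calc tAux N k ≤ ((N:ℝ) - k)/2 := ihU
        _ = (((N:ℝ)-1-(k:ℝ))+1)/2 := by ring
    rw [tAux_succ]
    constructor
    · exact top_step (aseq k) (aseq (k+1)) (tAux N k) (N:ℝ) ((N:ℝ)-1-(k:ℝ))
        hN (by linarith) (by linarith) c1 c2 c3 c4 ihL hU'
    · have := step_upper ((N:ℝ)-1-(k:ℝ)) (tAux N k) (by linarith) ht1 hU'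
      calc _ ≤ ((N:ℝ)-1-(k:ℝ))/2 := this
        _ = ((N:ℝ) - ((k:ℕ)+1:ℕ))/2 := by push_cast; ring
  
lemma main_chain (N : ℕ) (hN : (10^12:ℝ) ≤ (N:ℝ)) :
    ∀ n : ℕ, 21 ≤ n → Real.sqrt N + 1 ≤ ((N-1-n : ℕ):ℝ) →
      (((N-1-n:ℕ):ℝ)+1)/(Real.sqrt ((N:ℝ) - ((N-1-n:ℕ):ℝ) + 3) + 0.148) ≤ tAux N n
        ∧ tAux N n ≤ (((N-1-n:ℕ):ℝ)+1)/2 := by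
  have h22 : 22 ≤ N := by
    by_contra h
    push_neg at h
    have : (N:ℝ) < 22 := by exact_mod_cast h
    linarith
  intro n hn
  induction n, hn using Nat.le_induction with
  | base =>
    intro _
    have e1 : N - 1 - 21 = N - 22 := by omega
    have e2 : ((N-22:ℕ):ℝ) = (N:ℝ) - 22 := by
      push_cast [Nat.cast_sub h22]; ring
    rw [e1, e2]
    have e3 : (N:ℝ) - ((N:ℝ) - 22) + 3 = 25 := by ring
    rw [e3, show Real.sqrt 25 = 5 by
      rw [show (25:ℝ) = 5^2 by norm_num, Real.sqrt_sq (by norm_num)]]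
    obtain ⟨hL, hU⟩ := top_chain N hN 21 le_rfl
    constructor
    · have ha : aseq 21 = 24283291/125000000 := rfl
      rw [div_le_iff₀ (by norm_num)]
      rw [ha] at hL
      nlinarith
    · calc tAux N 21 ≤ ((N:ℝ) - (21:ℕ))/2 := hU
        _ = (((N:ℝ)-22)+1)/2 := by push_cast; ring
  | succ n hn ih =>
    intro hsq1
    have hsN : (10^6:ℝ) ≤ Real.sqrt N := by
      rw [← sqrt_1e12]; exact Real.sqrt_le_sqrt hN
    have hpos : 1 ≤ N - 1 - (n+1) := by
      by_contra h
      push_neg at h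
      have h0 : N - 1 - (n+1) = 0 := by omega
      rw [h0] at hsq1
      norm_num at hsq1
      linarith
    have hn2N : n + 2 ≤ N - 1 := by omega
    have hcast1 : ((N-1-n:ℕ):ℝ) = (N:ℝ)-1-(n:ℝ) := by
      have : N-1-n = N-(n+1) := by omega
      rw [this, Nat.cast_sub (by omega)]
      push_cast; ring
    have hcast2 : ((N-1-(n+1):ℕ):ℝ) = (N:ℝ)-1-(n:ℝ)-1 := by
      have : N-1-(n+1) = N-(n+2) := by omega
      rw [this, Nat.cast_sub (by omega)]
      push_cast; ring
    have hnr : (21:ℝ) ≤ (n:ℝ) := by exact_mod_cast hn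
    have ihpre : Real.sqrt N + 1 ≤ ((N-1-n:ℕ):ℝ) := by
      rw [hcast1]; rw [hcast2] at hsq1; linarith
    obtain ⟨ihL, ihU⟩ := ih ihpre
    rw [hcast1] at ihL ihU
    rw [hcast2]
    set j : ℝ := (N:ℝ)-1-(n:ℝ) with hjdef
    have hmid := mid_step (N:ℝ) j (tAux N n) hN
      (by rw [hcast2] at hsq1; linarith)
      (by simp only [hjdef]; linarith)
      ihL ihU
    rw [tAux_succ]
    constructor
    · have := hmid.1
      calc ((N:ℝ)-1-(n:ℝ)-1+1)/(Real.sqrt ((N:ℝ) - ((N:ℝ)-1-(n:ℝ)-1) + 3) + 0.148)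
          = j/(Real.sqrt ((N:ℝ) - (j-1) + 3) + 0.148) := by rw [hjdef]; ring_nf
        _ ≤ _ := this
    · have := hmid.2
      calc _ ≤ ((j-1)+1)/2 := this
        _ = ((N:ℝ)-1-(n:ℝ)-1+1)/2 := by rw [hjdef]

/-- Lower bound lemma: eventually `t_i ≥ (i + 1)/(√(N − i + 3) + 0.148)`
for all `i` with `√N + 1 ≤ i ≤ N − 22`. -/
theorem threshold_lower_bound :
    ∃ N₀ : ℕ, ∀ N : ℕ, N₀ ≤ N → ∀ i : ℕ,
      Real.sqrt N + 1 ≤ (i : ℝ) → (i : ℝ) ≤ (N : ℝ) - 22 →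
      tgame N i ≥ ((i : ℝ) + 1) / (Real.sqrt ((N : ℝ) - i + 3) + 0.148) := by
  refine ⟨10^12, fun N hN0 i hsq hle => ?_⟩
  have hN : (10^12:ℝ) ≤ (N:ℝ) := by exact_mod_cast hN0
  have h22 : i + 22 ≤ N := by
    have : (i:ℝ) + 22 ≤ (N:ℝ) := by linarith
    exact_mod_cast this
  set n := N - 1 - i with hndef
  have hn21 : 21 ≤ n := by omega
  have hrec : N - 1 - n = i := by omega
  have hmc := main_chain N hN n hn21 (by rw [hrec]; exact hsq)
  rw [hrec] at hmc
  exact hmc.1
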